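/- arXiv:2309.02657 — 4 statements merged into one kernel-verified Lean document; each statement's English description precedes it below -/
import Mathlib

section
/- Let Q be a real symmetric traceless 3×3 matrix. Then the Frobenius norm of Q² - (1/3)tr(Q²)·I equals (1/√6)·|Q|_F², where |Q|_F denotes the Frobenius norm. -/
/-!
Since `Q` is symmetric, `|Q|_F² = tr(Q²)` and `|Q² - cI|_F² = tr(Q⁴) - 2c tr(Q²) + 3c²`, which for
`c = tr(Q²)/3` is `tr(Q⁴) - tr(Q²)²/3`. For a traceless `3 × 3` matrix Newton's identities give
`tr(Q⁴) = tr(Q²)²/2`, so the squared norm of the deviator is `tr(Q²)²/6 = |Q|_F⁴/6`.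
-/

open Matrix

noncomputable def frob3 (M : Matrix (Fin 3) (Fin 3) ℝ) : ℝ :=
  Real.sqrt ((Mᵀ * M).trace)

namespace Matrix

variable {m n R : Type*} [Fintype m] [Fintype n]

theorem trace_transpose_mul_self_nonneg [CommRing R] [LinearOrder R] [IsStrictOrderedRing R]
    (A : Matrix m n R) : 0 ≤ (Aᵀ * A).trace :=
  Finset.sum_nonneg fun _ _ => Finset.sum_nonneg fun _ _ => mul_self_nonneg _

theorem trace_transpose_mul_self_sub_smul_one [DecidableEq n] [CommRing R] (S : Matrix n n R)
    (c : R) :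
    ((S - c • 1)ᵀ * (S - c • 1)).trace =
      (Sᵀ * S).trace - 2 * c * S.trace + c ^ 2 * Fintype.card n := by
  simp only [transpose_sub, transpose_smul, transpose_one, sub_mul, mul_sub, Matrix.smul_mul,
    Matrix.mul_smul, mul_one, one_mul, trace_sub, trace_smul, trace_transpose, trace_one, smul_eq_mul]
  ring

theorem two_mul_trace_sq_sq_of_trace_eq_zero [CommRing R] (Q : Matrix (Fin 3) (Fin 3) R)
    (htr : Q.trace = 0) : 2 * (Q * Q * (Q * Q)).trace = (Q * Q).trace ^ 2 := by
  have h22 : Q 2 2 = -(Q 0 0 + Q 1 1) := by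
    simp only [trace, diag, Fin.sum_univ_three] at htr
    linear_combination htr
  simp only [trace, diag, Fin.sum_univ_three, mul_apply, h22]
  ring

end Matrix

theorem frob3_sq (M : Matrix (Fin 3) (Fin 3) ℝ) : frob3 M ^ 2 = (Mᵀ * M).trace :=
  Real.sq_sqrt (trace_transpose_mul_self_nonneg M)

theorem frobenius_deviatoric_identity
    (Q : Matrix (Fin 3) (Fin 3) ℝ) (hsym : Q.IsSymm) (htr : Q.trace = 0) :
    frob3 (Q * Q - (((1 : ℝ) / 3) * (Q * Q).trace) • (1 : Matrix (Fin 3) (Fin 3) ℝ)) =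
      (1 / Real.sqrt 6) * (frob3 Q) ^ 2 := by
  have hQ : frob3 Q ^ 2 = (Q * Q).trace := by rw [frob3_sq, hsym.eq]
  have hQQ : (Q * Q)ᵀ * (Q * Q) = Q * Q * (Q * Q) := by rw [transpose_mul, hsym.eq]
  have hdev : ((Q * Q - ((1 / 3 : ℝ) * (Q * Q).trace) • 1)ᵀ *
      (Q * Q - ((1 / 3 : ℝ) * (Q * Q).trace) • 1)).trace = (Q * Q).trace ^ 2 / 6 := by
    rw [trace_transpose_mul_self_sub_smul_one, hQQ, Fintype.card_fin]
    linear_combination (1 / 2 : ℝ) * two_mul_trace_sq_sq_of_trace_eq_zero Q htr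
  rw [frob3, hdev, Real.sqrt_div' _ (by norm_num), Real.sqrt_sq (hQ ▸ sq_nonneg _), hQ]
  ring
end

section
/- Let Q be a real symmetric traceless 3×3 matrix. Then |tr(Q³)| ≤ |Q|_F³ / √6. -/
/-! Diagonalise `Q`: with eigenvalues `a + b + c = 0`, the claim is
`6 (a³ + b³ + c³)² ≤ (a² + b² + c²)³`. Substituting `c = -a - b`, the difference of the two sides
is `2 ((a - b)(2a + b)(a + 2b))²`. -/

open Matrix

theorem Matrix.IsHermitian.trace_pow_eq_sum_eigenvalues_pow {n 𝕜 : Type*} [Fintype n]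
    [DecidableEq n] [RCLike 𝕜] {A : Matrix n n 𝕜} (hA : A.IsHermitian) (k : ℕ) :
    (A ^ k).trace = ∑ i, (hA.eigenvalues i : 𝕜) ^ k := by
  conv_lhs => rw [hA.spectral_theorem]
  rw [← map_pow, Unitary.conjStarAlgAut_apply, trace_mul_cycle, Unitary.coe_star_mul_self,
    one_mul, diagonal_pow, trace_diagonal]
  simp

theorem sq_add_cubes_mul_six_le_add_sq_cube {a b c : ℝ} (h : a + b + c = 0) :
    (a ^ 3 + b ^ 3 + c ^ 3) ^ 2 * 6 ≤ (a ^ 2 + b ^ 2 + c ^ 2) ^ 3 := by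
  obtain rfl : c = -a - b := by linarith
  nlinarith [sq_nonneg ((a - b) * (2 * a + b) * (a + 2 * b))]

theorem abs_le_sqrt_pow_three_div_sqrt_six {x p : ℝ} (hp : 0 ≤ p) (h : x ^ 2 * 6 ≤ p ^ 3) :
    |x| ≤ √p ^ 3 / √6 := by
  refine abs_le_of_sq_le_sq ?_ (by positivity)
  rw [div_pow, ← pow_mul, pow_mul', Real.sq_sqrt hp, Real.sq_sqrt (by norm_num),
    le_div_iff₀ (by norm_num)]
  exact h

theorem trace_cube_bound
    (Q : Matrix (Fin 3) (Fin 3) ℝ) (hsym : Q.IsSymm) (htr : Q.trace = 0) :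
    |(Q * Q * Q).trace| ≤ (frob3 Q) ^ 3 / Real.sqrt 6 := by
  have hQ : Q.IsHermitian := by
    rwa [IsHermitian, conjTranspose_eq_transpose_of_trivial]
  set μ := hQ.eigenvalues
  have hsum : μ 0 + μ 1 + μ 2 = 0 := by
    simpa [hQ.trace_eq_sum_eigenvalues, Fin.sum_univ_three] using htr
  have hfrob : frob3 Q = √(μ 0 ^ 2 + μ 1 ^ 2 + μ 2 ^ 2) := by
    rw [frob3, hsym.eq, ← sq, hQ.trace_pow_eq_sum_eigenvalues_pow, Fin.sum_univ_three]
    simp [μ]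
  have hcube : (Q * Q * Q).trace = μ 0 ^ 3 + μ 1 ^ 3 + μ 2 ^ 3 := by
    rw [← pow_three', hQ.trace_pow_eq_sum_eigenvalues_pow, Fin.sum_univ_three]
    simp [μ]
  rw [hcube, hfrob]
  exact abs_le_sqrt_pow_three_div_sqrt_six (by positivity)
    (sq_add_cubes_mul_six_le_add_sq_cube hsum)
end

section
/- Let B be a real N×N matrix with b_{kk} ≤ 0 and b_{kk} + Σ_{l≠k} |b_{kl}| ≤ 0 for all k, and let A = αI - B with α > 0. Then A is invertible and the operator norm of A⁻¹ with respect to the maximum (ℓ^∞) vector norm satisfies ‖A⁻¹‖_∞ ≤ 1/α. -/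
/-!
Write `A = αI - B`. The hypotheses say exactly that every row of `A` is diagonally dominant with
margin `α`: `α + ∑_{l ≠ k} |A k l| ≤ |A k k|`. Evaluating `A x` at an index `k` where `|x k|` is
maximal then gives `α ‖x‖_∞ ≤ ‖A x‖_∞`. So `A` is invertible (Gershgorin), and taking
`x = A⁻¹ v` bounds `‖A⁻¹ v‖_∞` by `‖v‖_∞ / α`.
-/

open Matrix Finset

section RowDominant

variable {K n : Type*} [NormedField K] [Fintype n] [DecidableEq n] {A : Matrix n n K} {α : ℝ}

theorem Matrix.mul_norm_le_norm_mulVec_apply_of_row_dominant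
    (hA : ∀ k, α + ∑ l ∈ univ.erase k, ‖A k l‖ ≤ ‖A k k‖) {x : n → K} {k : n}
    (hk : ∀ l, ‖x l‖ ≤ ‖x k‖) : α * ‖x k‖ ≤ ‖(A *ᵥ x) k‖ := by
  set off := ∑ l ∈ univ.erase k, A k l * x l
  have hsplit : (A *ᵥ x) k = A k k * x k + off := (add_sum_erase _ _ (mem_univ k)).symm
  have hoff : ‖off‖ ≤ (∑ l ∈ univ.erase k, ‖A k l‖) * ‖x k‖ :=
    calc ‖off‖ ≤ ∑ l ∈ univ.erase k, ‖A k l‖ * ‖x l‖ :=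
          norm_sum_le_of_le _ fun l _ => (norm_mul _ _).le
      _ ≤ ∑ l ∈ univ.erase k, ‖A k l‖ * ‖x k‖ :=
          sum_le_sum fun l _ => mul_le_mul_of_nonneg_left (hk l) (norm_nonneg _)
      _ = _ := (sum_mul ..).symm
  calc α * ‖x k‖ ≤ (‖A k k‖ - ∑ l ∈ univ.erase k, ‖A k l‖) * ‖x k‖ :=
        mul_le_mul_of_nonneg_right (by linarith [hA k]) (norm_nonneg _)
    _ ≤ ‖A k k * x k‖ - ‖off‖ := by rw [norm_mul]; linarith
    _ ≤ ‖(A *ᵥ x) k‖ := by rw [hsplit]; exact norm_sub_le_norm_add _ _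

theorem Matrix.mul_norm_le_norm_mulVec_of_row_dominant
    (hA : ∀ k, α + ∑ l ∈ univ.erase k, ‖A k l‖ ≤ ‖A k k‖) (x : n → K) :
    α * ‖x‖ ≤ ‖A *ᵥ x‖ := by
  cases isEmpty_or_nonempty n
  · simp [Subsingleton.elim x 0]
  obtain ⟨k, -, hk⟩ := exists_max_image univ (fun l => ‖x l‖) univ_nonempty
  have hk : ∀ l, ‖x l‖ ≤ ‖x k‖ := fun l => hk l (mem_univ l)
  have hxk : ‖x‖ = ‖x k‖ :=
    le_antisymm ((pi_norm_le_iff_of_nonneg (norm_nonneg _)).2 hk) (norm_le_pi_norm x k)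
  rw [hxk]
  exact (mul_norm_le_norm_mulVec_apply_of_row_dominant hA hk).trans (norm_le_pi_norm _ k)

theorem Matrix.isUnit_of_row_dominant (hα : 0 < α)
    (hA : ∀ k, α + ∑ l ∈ univ.erase k, ‖A k l‖ ≤ ‖A k k‖) : IsUnit A :=
  (isUnit_iff_isUnit_det A).2 (det_ne_zero_of_sum_row_lt_diag fun k => by linarith [hA k]).isUnit

theorem Matrix.norm_inv_mulVec_le_of_row_dominant (hα : 0 < α)
    (hA : ∀ k, α + ∑ l ∈ univ.erase k, ‖A k l‖ ≤ ‖A k k‖) (v : n → K) :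
    ‖A⁻¹ *ᵥ v‖ ≤ ‖v‖ / α := by
  have hdet := (isUnit_iff_isUnit_det A).1 (isUnit_of_row_dominant hα hA)
  have := mul_norm_le_norm_mulVec_of_row_dominant hA (A⁻¹ *ᵥ v)
  rwa [mulVec_mulVec, mul_nonsing_inv A hdet, one_mulVec, mul_comm, ← le_div_iff₀ hα] at this

end RowDominant

theorem Pi.norm_le_iSup_abs {n : Type*} [Fintype n] (v : n → ℝ) : ‖v‖ ≤ ⨆ l, |v l| :=
  (pi_norm_le_iff_of_nonneg (Real.iSup_nonneg fun _ => abs_nonneg _)).2 fun l =>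
    (Real.norm_eq_abs _).trans_le <| le_ciSup (Set.finite_range fun l => |v l|).bddAbove l

theorem Matrix.smul_one_sub_row_dominant {n : Type*} [Fintype n] [DecidableEq n]
    {B : Matrix n n ℝ} (hB : ∀ k, B k k + ∑ l ∈ univ.erase k, |B k l| ≤ 0) {α : ℝ} (hα : 0 ≤ α)
    (k : n) : α + ∑ l ∈ univ.erase k, ‖(α • 1 - B) k l‖ ≤ ‖(α • 1 - B) k k‖ := by
  have hoff : ∀ l ∈ univ.erase k, ‖(α • 1 - B) k l‖ = |B k l| := fun l hl => by
    simp [one_apply_ne' (ne_of_mem_erase hl)]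
  have hoff_nonneg : 0 ≤ ∑ l ∈ univ.erase k, |B k l| := sum_nonneg fun _ _ => abs_nonneg _
  have hdiag : (α • 1 - B) k k = α - B k k := by simp
  rw [sum_congr rfl hoff, Real.norm_eq_abs, hdiag, abs_of_nonneg (by linarith [hB k])]
  linarith [hB k]

theorem inverse_inf_norm_bound_general {N : ℕ} (B : Matrix (Fin N) (Fin N) ℝ)
    (hdom : ∀ k, B k k + ∑ l ∈ Finset.univ.erase k, |B k l| ≤ 0)
    (α : ℝ) (hα : 0 < α) (A : Matrix (Fin N) (Fin N) ℝ)
    (hA : A = α • (1 : Matrix (Fin N) (Fin N) ℝ) - B) :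
    IsUnit A ∧ ∀ v : Fin N → ℝ, ∀ k, |(A⁻¹ *ᵥ v) k| ≤ (1 / α) * ⨆ l, |v l| := by
  subst hA
  have hdomA := smul_one_sub_row_dominant hdom hα.le
  refine ⟨isUnit_of_row_dominant hα hdomA, fun v k => ?_⟩
  calc |((α • 1 - B)⁻¹ *ᵥ v) k| ≤ ‖(α • 1 - B)⁻¹ *ᵥ v‖ :=
        (Real.norm_eq_abs _).symm.trans_le (norm_le_pi_norm _ k)
    _ ≤ ‖v‖ / α := norm_inv_mulVec_le_of_row_dominant hα hdomA v
    _ ≤ (1 / α) * ⨆ l, |v l| := by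
      rw [one_div_mul_eq_div]
      gcongr
      exact Pi.norm_le_iSup_abs v

theorem inverse_inf_norm_bound {N : ℕ} (B : Matrix (Fin N) (Fin N) ℝ)
    (hdiag : ∀ k, B k k ≤ 0)
    (hdom : ∀ k, B k k + ∑ l ∈ Finset.univ.erase k, |B k l| ≤ 0)
    (α : ℝ) (hα : 0 < α) (A : Matrix (Fin N) (Fin N) ℝ)
    (hA : A = α • (1 : Matrix (Fin N) (Fin N) ℝ) - B) :
    IsUnit A ∧ ∀ v : Fin N → ℝ, ∀ k, |(A⁻¹ *ᵥ v) k| ≤ (1 / α) * ⨆ l, |v l| :=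
  inverse_inf_norm_bound_general B hdom α hα A hA
end

section
/- Let d = 3, a ∈ ℝ, b ≥ 0, c > 0, and f(Q)^{ij} = -aQ^{ij} + b((Q²)^{ij} - (1/3)tr(Q²)δ^{ij}) - c·tr(Q²)Q^{ij} for Q a real symmetric traceless 3×3 matrix. Suppose |Q|_F ≤ η and κ ≥ max{a + cη², 0}. Then √(Σ_{i,j=1}^3 (κQ^{ij} + f(Q)^{ij})²) ≤ κ|Q|_F + f̄(|Q|_F), where f̄(ξ) = -aξ + (b/√6)ξ² - cξ³. -/
/-!
Write `t = tr(Q²) = |Q|_F²`. The matrix `κQ + f(Q)` equals `(κ - a - c t) Q + b (Q² - (t/3) I)`,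
whose first coefficient is nonnegative because `t ≤ η²`. The triangle inequality for the
Frobenius norm then reduces the claim to `|Q² - (t/3) I|_F = t / √6`, which for a symmetric
traceless `3 × 3` matrix is a polynomial identity in its five free entries (in eigenvalues:
`λ₁ + λ₂ + λ₃ = 0` forces `∑ λᵢ⁴ = (∑ λᵢ²)² / 2`).
-/

open Matrix

attribute [local instance] Matrix.frobeniusNormedAddCommGroup Matrix.frobeniusNormedSpace

namespace Matrix

variable {m n : Type*} [Fintype m] [Fintype n]

theorem frobenius_norm_eq_sqrt_sum_sq (A : Matrix m n ℝ) :
    ‖A‖ = √(∑ i, ∑ j, A i j ^ 2) := by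
  simp only [frobenius_norm_def, Real.norm_eq_abs, Real.rpow_two, sq_abs,
    Real.sqrt_eq_rpow]

theorem trace_transpose_mul_self (A : Matrix m n ℝ) :
    (Aᵀ * A).trace = ∑ i, ∑ j, A i j ^ 2 := by
  simp only [trace, diag, mul_apply, transpose_apply, ← sq]
  exact Finset.sum_comm

theorem frobenius_norm_sq_eq_trace (A : Matrix m n ℝ) : ‖A‖ ^ 2 = (Aᵀ * A).trace := by
  rw [frobenius_norm_eq_sqrt_sum_sq, trace_transpose_mul_self,
    Real.sq_sqrt (by positivity)]

theorem IsSymm.trace_mul_self_eq_frobenius_norm_sq {Q : Matrix n n ℝ} (hQ : Q.IsSymm) :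
    (Q * Q).trace = ‖Q‖ ^ 2 := by
  rw [frobenius_norm_sq_eq_trace, hQ.eq]

theorem frobenius_norm_mul_self_sub_trace_of_traceless {Q : Matrix (Fin 3) (Fin 3) ℝ}
    (hsym : Q.IsSymm) (htr : Q.trace = 0) :
    ‖Q * Q - ((1 / 3) * (Q * Q).trace) • (1 : Matrix (Fin 3) (Fin 3) ℝ)‖ =
      ‖Q‖ ^ 2 / √6 := by
  have h10 : Q 1 0 = Q 0 1 := hsym.apply 0 1
  have h20 : Q 2 0 = Q 0 2 := hsym.apply 0 2
  have h21 : Q 2 1 = Q 1 2 := hsym.apply 1 2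
  have h22 : Q 2 2 = -Q 0 0 - Q 1 1 := by
    simp only [trace, diag, Fin.sum_univ_three] at htr
    linarith
  have h6 : √6 ^ 2 = 6 := Real.sq_sqrt (by norm_num)
  rw [← sq_eq_sq₀ (norm_nonneg _) (by positivity), frobenius_norm_eq_sqrt_sum_sq,
    Real.sq_sqrt (by positivity), div_pow, h6, ← hsym.trace_mul_self_eq_frobenius_norm_sq]
  simp only [sub_apply, smul_apply, one_apply, mul_apply, trace, diag, Fin.sum_univ_three,
    smul_eq_mul, h10, h20, h21, h22]
  norm_num [Fin.ext_iff]
  ring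

end Matrix

theorem frob3_eq_norm (M : Matrix (Fin 3) (Fin 3) ℝ) : frob3 M = ‖M‖ := by
  rw [frob3, ← frobenius_norm_sq_eq_trace, Real.sqrt_sq (norm_nonneg M)]

theorem stabilized_nonlinearity_bound_3d
    (a b c η κ : ℝ) (hb : 0 ≤ b) (hc : 0 < c)
    (Q : Matrix (Fin 3) (Fin 3) ℝ) (hsym : Q.IsSymm) (htr : Q.trace = 0)
    (hQ : frob3 Q ≤ η) (hκ : max (a + c * η ^ 2) 0 ≤ κ) :
    Real.sqrt (∑ i, ∑ j,
        (κ * Q i j +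
          (-a * Q i j +
            b * ((Q * Q) i j - (1 / 3) * (Q * Q).trace * (if i = j then 1 else 0)) -
            c * (Q * Q).trace * Q i j)) ^ 2) ≤
      κ * frob3 Q +
        (-a * frob3 Q + (b / Real.sqrt 6) * (frob3 Q) ^ 2 - c * (frob3 Q) ^ 3) := by
  rw [frob3_eq_norm] at hQ ⊢
  set B := Q * Q - ((1 / 3) * (Q * Q).trace) • (1 : Matrix (Fin 3) (Fin 3) ℝ)
  set l := κ - a - c * ‖Q‖ ^ 2
  have hl : 0 ≤ l := by
    have : c * ‖Q‖ ^ 2 ≤ c * η ^ 2 := by gcongr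
    linarith [le_of_max_le_left hκ]
  have hdecomp : ∀ i j, κ * Q i j + (-a * Q i j +
      b * ((Q * Q) i j - (1 / 3) * (Q * Q).trace * (if i = j then 1 else 0)) -
      c * (Q * Q).trace * Q i j) = (l • Q + b • B) i j := by
    intro i j
    simp only [B, l, Matrix.add_apply, Matrix.smul_apply, Matrix.sub_apply, one_apply,
      smul_eq_mul, hsym.trace_mul_self_eq_frobenius_norm_sq]
    ring
  simp only [hdecomp, ← frobenius_norm_eq_sqrt_sum_sq]
  calc ‖l • Q + b • B‖ ≤ ‖l • Q‖ + ‖b • B‖ := norm_add_le _ _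
    _ = l * ‖Q‖ + b * ‖B‖ := by
        rw [norm_smul, norm_smul, Real.norm_of_nonneg hl, Real.norm_of_nonneg hb]
    _ = _ := by
        rw [frobenius_norm_mul_self_sub_trace_of_traceless hsym htr]
        ring
end
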